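/- Let (𝐓,γ) be a quasistatic dynamical system satisfying conditions (I) and (II). Then for each α,β ∈ {1,…,d}, the map t ↦ (Σ̂_t)_{αβ}(f) is Hölder continuous on [0,1] with exponent ψ(φ−1)/(φ+1). -/

import Mathlib

open MeasureTheory Filter Set ProbabilityTheory
open scoped Classical

noncomputable section

variable {X : Type*}

/-- `compSeq S k = S k ∘ ⋯ ∘ S 1` (`= id` for `k = 0`): a `k`-fold composition `𝒯_k`. -/
def compSeq (S : ℕ → X → X) : ℕ → X → X
  | 0 => id
  | k+1 => S (k+1) ∘ compSeq S k

/-- `rowComp T n m k = T n (m+k) ∘ ⋯ ∘ T n (m+1)` (`= id` for `k = 0`). -/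
def rowComp (T : ℕ → ℕ → X → X) (n m : ℕ) : ℕ → X → X
  | 0 => id
  | k+1 => T n (m+k+1) ∘ rowComp T n m k

/-- `gammaSeq γ r k = γ_{r k} ∘ ⋯ ∘ γ_{r 1}` (`= id` for `k = 0`). -/
def gammaSeq (γ : ℝ → X → X) (r : ℕ → ℝ) : ℕ → X → X
  | 0 => id
  | k+1 => γ (r (k+1)) ∘ gammaSeq γ r k

/-- `gammaRow γ n m k = γ_{(m+k)/n} ∘ ⋯ ∘ γ_{(m+1)/n}` (`= id` for `k = 0`). -/
def gammaRow (γ : ℝ → X → X) (n m : ℕ) : ℕ → X → X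
  | 0 => id
  | k+1 => γ (((m:ℝ) + k + 1) / (n:ℝ)) ∘ gammaRow γ n m k

/-- The family `𝐓' = 𝐓 ∪ {γ_t : t ∈ [0,1]}`. -/
def Tprime (T : ℕ → ℕ → X → X) (γ : ℝ → X → X) : Set (X → X) :=
  {S | (∃ n k : ℕ, 1 ≤ n ∧ k ≤ n ∧ S = T n k) ∨ ∃ t ∈ Set.Icc (0:ℝ) 1, S = γ t}

/-- Functions of the form `F = f_a · (f_b ∘ T_k ∘ ⋯ ∘ T_1)^q`, `T_i ∈ 𝐓'`,
`a, b ∈ {1,…,d}`, `q ∈ {0,1}`. -/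
def IsFform {d : ℕ} (f : X → Fin d → ℝ) (T' : Set (X → X)) (F : X → ℝ) : Prop :=
  ∃ (a b : Fin d) (q k : ℕ) (S : ℕ → X → X), q ≤ 1 ∧ (∀ i, 1 ≤ i → i ≤ k → S i ∈ T') ∧
    F = fun x => f x a * (f (compSeq S k x) b) ^ q

/-- The family `𝒞` of measures: the smallest family containing `μ` and all `μ̂_t`, `t ∈ [0,1]`,
and closed under pushforward by maps in `𝐓'`. -/
inductive MemC [MeasurableSpace X] (μ : Measure X) (μhat : ℝ → Measure X)
    (T' : Set (X → X)) : Measure X → Prop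
  | base : MemC μ μhat T' μ
  | hat (t : ℝ) (ht : t ∈ Set.Icc (0:ℝ) 1) : MemC μ μhat T' (μhat t)
  | push (ν : Measure X) (S : X → X) (hS : S ∈ T') (hν : MemC μ μhat T' ν) :
      MemC μ μhat T' (ν.map S)

/-- Condition (I): polynomial memory loss / decay of correlations, uniformly over the
family `𝒞` and over compositions of maps from `𝐓'`. -/
def CondI {d : ℕ} [MeasurableSpace X] (T : ℕ → ℕ → X → X) (γ : ℝ → X → X)
    (μ : Measure X) (μhat : ℝ → Measure X) (f : X → Fin d → ℝ)
    (C φ : ℝ) (n₁ : ℕ) : Prop :=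
  ∀ F : X → ℝ, IsFform f (Tprime T γ) F →
    ∀ ν₁ ν₂ : Measure X, MemC μ μhat (Tprime T γ) ν₁ → MemC μ μhat (Tprime T γ) ν₂ →
      ∀ S : ℕ → X → X, (∀ i, 1 ≤ i → S i ∈ Tprime T γ) →
        ∀ n m : ℕ, n + n₁ ≤ m → ∀ (α : Fin d) (p : ℕ), p ≤ 1 →
          |(∫ x, (f (compSeq S n x) α) ^ p * F (compSeq S m x) ∂ν₁) -
              (∫ x, (f (compSeq S n x) α) ^ p ∂ν₁) * ∫ x, F (compSeq S m x) ∂ν₂| ≤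
            C * ((m : ℝ) - (n : ℝ)) ^ (-φ)

/-- Condition (II): perturbation estimates with exponent `ψ`. -/
def CondII {d : ℕ} [MeasurableSpace X] (T : ℕ → ℕ → X → X) (γ : ℝ → X → X)
    (μ : Measure X) (μhat : ℝ → Measure X) (f : X → Fin d → ℝ) (C ψ : ℝ) : Prop :=
  (∀ F : X → ℝ, IsFform f (Tprime T γ) F →
    ∀ ν : Measure X, MemC μ μhat (Tprime T γ) ν →
      ∀ k m n : ℕ, k + m ≤ n → ∀ (α : Fin d) (p : ℕ), p ≤ 1 →
        |∫ x, (f x α) ^ p * (F (rowComp T n m k x) - F (gammaRow γ n m k x)) ∂ν| ≤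
          C * (k : ℝ) * (n : ℝ) ^ (-ψ)) ∧
  (∀ F : X → ℝ, IsFform f (Tprime T γ) F →
    ∀ s ∈ Set.Icc (0:ℝ) 1, ∀ (k : ℕ) (r : ℕ → ℝ),
      (∀ l, 1 ≤ l → l ≤ k → r l ∈ Set.Icc (0:ℝ) 1) →
      ∀ (α : Fin d) (p : ℕ), p ≤ 1 → ∀ M : ℝ, 0 ≤ M → (∀ l, 1 ≤ l → l ≤ k → |s - r l| ≤ M) →
        |∫ x, (f x α) ^ p * (F ((γ s)^[k] x) - F (gammaSeq γ r k x)) ∂(μhat s)| ≤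
          C * (k : ℝ) * M ^ ψ)

/-- The fluctuation process `ξ_n(x,t) = √n ∫_0^t f̄^{n,⌊nr⌋}(x) dr`. -/
def xiQ {d : ℕ} [MeasurableSpace X] (T : ℕ → ℕ → X → X) (μ : Measure X)
    (f : X → Fin d → ℝ) (n : ℕ) (t : ℝ) (x : X) : Fin d → ℝ :=
  fun α => Real.sqrt n * ∫ r in (0:ℝ)..t,
    (f (rowComp T n 0 ⌊(n:ℝ) * r⌋₊ x) α - ∫ y, f (rowComp T n 0 ⌊(n:ℝ) * r⌋₊ y) α ∂μ)

/-- The covariance matrix `Σ_{n,t} = μ[ξ_n(t) ⊗ ξ_n(t)]`. -/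
def SigNt {d : ℕ} [MeasurableSpace X] (T : ℕ → ℕ → X → X) (μ : Measure X)
    (f : X → Fin d → ℝ) (n : ℕ) (t : ℝ) : Matrix (Fin d) (Fin d) ℝ :=
  Matrix.of fun α β => ∫ x, xiQ T μ f n t x α * xiQ T μ f n t x β ∂μ

/-- The centered observable `f̂_{α,t} = f_α − μ̂_t(f_α)`. -/
def fhatQ {d : ℕ} [MeasurableSpace X] (μhat : ℝ → Measure X) (f : X → Fin d → ℝ)
    (α : Fin d) (t : ℝ) (x : X) : ℝ :=
  f x α - ∫ y, f y α ∂(μhat t)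

/-- `Σ̂_t(f)`, defined as the limit (if it exists) of the covariance matrices of the scaled
Birkhoff sums `m^{-1/2} Σ_{k<m} f̂_t ∘ γ_t^k` with respect to `μ̂_t`. -/
def SigHat {d : ℕ} [MeasurableSpace X] (γ : ℝ → X → X) (μhat : ℝ → Measure X)
    (f : X → Fin d → ℝ) (t : ℝ) : Matrix (Fin d) (Fin d) ℝ :=
  Matrix.of fun α β => limUnder atTop (fun m : ℕ =>
    ∫ x, ((Real.sqrt m)⁻¹ * ∑ k ∈ Finset.range m, fhatQ μhat f α t ((γ t)^[k] x)) *
         ((Real.sqrt m)⁻¹ * ∑ k ∈ Finset.range m, fhatQ μhat f β t ((γ t)^[k] x)) ∂(μhat t))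

/-- `Σ_t = ∫_0^t Σ̂_s(f) ds`. -/
def SigT {d : ℕ} [MeasurableSpace X] (γ : ℝ → X → X) (μhat : ℝ → Measure X)
    (f : X → Fin d → ℝ) (t : ℝ) : Matrix (Fin d) (Fin d) ℝ :=
  Matrix.of fun α β => ∫ s in (0:ℝ)..t, SigHat γ μhat f s α β

/-- The standard Gaussian on `ℝ^d`. -/
def stdGaussianPi (d : ℕ) : Measure (Fin d → ℝ) :=
  Measure.pi fun _ => gaussianReal 0 1

/-- The centered `d`-dimensional normal distribution `N(0, S)`
(junk value `0` if `S` is not positive semidefinite). -/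
def gaussianOfMatrix {d : ℕ} (S : Matrix (Fin d) (Fin d) ℝ) : Measure (Fin d → ℝ) :=
  if h : S.PosSemidef then (stdGaussianPi d).map
    (h.1.eigenvectorUnitary.1 * Matrix.diagonal ((√·) ∘ h.1.eigenvalues) *
      (star h.1.eigenvectorUnitary : Matrix (Fin d) (Fin d) ℝ)).mulVec else 0

/-- `Φ_S(h)`: the expectation of `h` with respect to `N(0, S)`. -/
def PhiGauss {d : ℕ} (S : Matrix (Fin d) (Fin d) ℝ) (h : (Fin d → ℝ) → ℝ) : ℝ :=
  ∫ z, h z ∂(gaussianOfMatrix S)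

end

/-!
Write `c_t^{ab}(k) = μ̂_t(f̂_a · f̂_b ∘ γ_t^k)`. Since `γ_t` preserves `μ̂_t`, the covariance of the
scaled Birkhoff sums is a Cesàro mean of the partial sums of
`c_t^{αβ}(0) + Σ_{k ≥ 1} (c_t^{αβ}(k) + c_t^{βα}(k))`, and by (I) `|c_t(k)| ≤ C₀ k^{-φ}`, so
`Σ̂_t` is this series. To compare `c_t(k)` with `c_s(k)`, push both integrals `m ≥ k` steps forward
by their own dynamics: by (I) changing the measure then costs `m^{-φ}`, and by (II) changing the
dynamics costs `m |t - s|^ψ`. Using this bound on the first `N` lags and the decay bound on the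
others gives `|Σ̂_t - Σ̂_s| ≲ N² |t - s|^ψ + N^{1-φ}`, and `N ≈ |t - s|^{-ψ/(φ+1)}` balances the
two.
-/

section RpowSeries

theorem sum_range_rpow_neg_le {φ x : ℝ} (hφ : 1 < φ) (hx : 0 < x) (n : ℕ) :
    ∑ k ∈ Finset.range n, (x + ↑(k + 1)) ^ (-φ) ≤ x ^ (1 - φ) / (φ - 1) := by
  have hanti : AntitoneOn (fun y : ℝ => y ^ (-φ)) (Set.Icc x (x + n)) := fun a ha b _ hab =>
    Real.rpow_le_rpow_of_nonpos (hx.trans_le ha.1) hab (by linarith)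
  have hzero : (0 : ℝ) ∉ Set.uIcc x (x + n) := by
    rw [Set.uIcc_of_le (le_add_of_nonneg_right n.cast_nonneg)]
    exact fun h => hx.not_ge h.1
  refine hanti.sum_le_integral.trans ?_
  rw [integral_rpow (Or.inr ⟨by linarith, hzero⟩), show -φ + 1 = 1 - φ by ring,
    ← neg_div_neg_eq, neg_sub, neg_sub]
  exact div_le_div_of_nonneg_right (sub_le_self _ (Real.rpow_nonneg (by positivity) _))
    (by linarith)

theorem tsum_rpow_neg_le {φ x : ℝ} (hφ : 1 < φ) (hx : 0 < x) :
    Summable (fun k : ℕ => (x + ↑(k + 1)) ^ (-φ)) ∧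
      ∑' k : ℕ, (x + ↑(k + 1)) ^ (-φ) ≤ x ^ (1 - φ) / (φ - 1) := by
  have hnonneg : ∀ k : ℕ, 0 ≤ (x + ↑(k + 1)) ^ (-φ) := fun k =>
    Real.rpow_nonneg (by positivity) _
  exact ⟨summable_of_sum_range_le hnonneg (sum_range_rpow_neg_le hφ hx),
    Real.tsum_le_of_sum_range_le hnonneg (sum_range_rpow_neg_le hφ hx)⟩

theorem abs_tsum_sub_tsum_le {a b : ℕ → ℝ} {φ K ε : ℝ} (hφ : 1 < φ) {N : ℕ} (hN : 0 < N)
    (hhead : ∀ k < N, |a k - b k| ≤ ε)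
    (htail : ∀ k, N ≤ k → |a k| + |b k| ≤ K * ((k : ℝ) + 1) ^ (-φ)) :
    |∑' k, a k - ∑' k, b k| ≤ N * ε + K * (N : ℝ) ^ (1 - φ) / (φ - 1) := by
  obtain ⟨hsumm, htsum⟩ := tsum_rpow_neg_le hφ (Nat.cast_pos.mpr hN)
  have htail' : ∀ k : ℕ, |a (k + N)| + |b (k + N)| ≤ K * ((N : ℝ) + ↑(k + 1)) ^ (-φ) := by
    intro k
    convert htail (k + N) (Nat.le_add_left N k) using 3
    push_cast; ring
  have hK : 0 ≤ K := nonneg_of_mul_nonneg_left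
    ((add_nonneg (abs_nonneg _) (abs_nonneg _)).trans (htail' 0))
    (Real.rpow_pos_of_pos (by positivity) _)
  have hsummable (c : ℕ → ℝ) (hc : ∀ k, |c (k + N)| ≤ K * ((N : ℝ) + ↑(k + 1)) ^ (-φ)) :
      Summable c :=
    (summable_nat_add_iff N).mp (Summable.of_norm_bounded (hsumm.mul_left K) hc)
  have ha := hsummable a fun k => le_of_add_le_of_nonneg_left (htail' k) (abs_nonneg _)
  have hb := hsummable b fun k => le_of_add_le_of_nonneg_right (htail' k) (abs_nonneg _)
  have hsplit := ((ha.sub hb).sum_add_tsum_nat_add N).symm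
  rw [← ha.tsum_sub hb, hsplit]
  have hheadsum : |∑ k ∈ Finset.range N, (a k - b k)| ≤ N * ε := by
    refine (Finset.abs_sum_le_sum_abs _ _).trans ?_
    simpa using Finset.sum_le_card_nsmul _ _ ε fun k hk => hhead k (Finset.mem_range.mp hk)
  have htailsum : |∑' k, (a (k + N) - b (k + N))| ≤ K * (N : ℝ) ^ (1 - φ) / (φ - 1) := by
    have hbound := tsum_of_norm_bounded (f := fun k => a (k + N) - b (k + N))
      (hsumm.mul_left K).hasSum fun k => by
        rw [Real.norm_eq_abs]; exact (abs_sub _ _).trans (htail' k)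
    rw [Real.norm_eq_abs] at hbound
    refine hbound.trans ?_
    rw [tsum_mul_left, mul_div_assoc]
    exact mul_le_mul_of_nonneg_left htsum hK
  exact (abs_add_le _ _).trans (add_le_add hheadsum htailsum)

theorem exists_nat_sq_mul_rpow_add_rpow_le {h ψ φ : ℝ} (hh₀ : 0 < h) (hh₁ : h ≤ 1) (hψ : 0 < ψ)
    (hφ : 1 < φ) (n₁ : ℕ) :
    ∃ N : ℕ, n₁ ≤ N ∧ 0 < N ∧
      (N : ℝ) ^ 2 * h ^ ψ + (N : ℝ) ^ (1 - φ) ≤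
        (((n₁ : ℝ) + 2) ^ 2 + 1) * h ^ (ψ * (φ - 1) / (φ + 1)) := by
  set z := h ^ (-ψ / (φ + 1))
  have hz : 1 ≤ z := Real.one_le_rpow_of_pos_of_le_one_of_nonpos hh₀ hh₁
    (div_nonpos_of_nonpos_of_nonneg (by linarith) (by linarith))
  refine ⟨n₁ + ⌈z⌉₊, Nat.le_add_right _ _, by positivity, ?_⟩
  have hzN : z ≤ ((n₁ + ⌈z⌉₊ : ℕ) : ℝ) := by
    push_cast; linarith [Nat.le_ceil z, (n₁.cast_nonneg : (0 : ℝ) ≤ n₁)]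
  have hNz : ((n₁ + ⌈z⌉₊ : ℕ) : ℝ) ≤ ((n₁ : ℝ) + 2) * z := by
    push_cast
    nlinarith [Nat.ceil_lt_add_one (zero_le_one.trans hz), (n₁.cast_nonneg : (0 : ℝ) ≤ n₁)]
  have hsq : z ^ 2 * h ^ ψ = h ^ (ψ * (φ - 1) / (φ + 1)) := by
    rw [← Real.rpow_natCast, ← Real.rpow_mul hh₀.le, ← Real.rpow_add hh₀]
    congr 1; field_simp; push_cast; ring
  have hpow : z ^ (1 - φ) = h ^ (ψ * (φ - 1) / (φ + 1)) := by
    rw [← Real.rpow_mul hh₀.le]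
    congr 1; field_simp; ring
  have hhead : ((n₁ + ⌈z⌉₊ : ℕ) : ℝ) ^ 2 * h ^ ψ ≤
      ((n₁ : ℝ) + 2) ^ 2 * h ^ (ψ * (φ - 1) / (φ + 1)) := by
    rw [← hsq, ← mul_assoc, ← mul_pow]
    gcongr
  have htail : ((n₁ + ⌈z⌉₊ : ℕ) : ℝ) ^ (1 - φ) ≤ h ^ (ψ * (φ - 1) / (φ + 1)) :=
    hpow ▸ Real.rpow_le_rpow_of_nonpos (by linarith) hzN (by linarith)
  linarith

end RpowSeries

open Finset in
theorem sum_range_sum_range_eq_of_lag {M : Type*} [AddCommMonoid M] {R : ℕ → ℕ → M} {a b : ℕ → M}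
    (ha : ∀ j l, j ≤ l → R j l = a (l - j)) (hb : ∀ j l, l ≤ j → R j l = b (j - l)) (m : ℕ) :
    ∑ j ∈ range m, ∑ l ∈ range m, R j l =
      ∑ i ∈ range m, (a 0 + ∑ k ∈ range i, (a (k + 1) + b (k + 1))) := by
  induction m with
  | zero => simp
  | succ m ih =>
    have hrow : ∑ l ∈ range m, R m l = ∑ k ∈ range m, b (k + 1) := by
      rw [← sum_range_reflect]
      exact sum_congr rfl fun k hk => by
        rw [Finset.mem_range] at hk; rw [hb _ _ (by omega)]; congr 1; omega
    have hcol : ∑ j ∈ range m, R j m = ∑ k ∈ range m, a (k + 1) := by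
      rw [← sum_range_reflect]
      exact sum_congr rfl fun k hk => by
        rw [Finset.mem_range] at hk; rw [ha _ _ (by omega)]; congr 1; omega
    have hdiag : R m m = a 0 := by rw [ha m m le_rfl, Nat.sub_self]
    simp only [sum_range_succ, sum_add_distrib] at ih ⊢
    rw [ih, hrow, hcol, hdiag]
    abel

section LagCovariance

variable {X : Type*} [MeasurableSpace X] {ν : Measure X} {g : X → X} {u v : X → ℝ}

noncomputable def lagCorr (ν : Measure X) (g : X → X) (u v : X → ℝ) (k : ℕ) : ℝ :=
  ∫ x, u x * v (g^[k] x) ∂ν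

theorem MeasureTheory.MeasurePreserving.integral_comp_iterate (hg : MeasurePreserving g ν ν)
    {F : X → ℝ} (hF : AEStronglyMeasurable F ν) (k : ℕ) : ∫ x, F (g^[k] x) ∂ν = ∫ x, F x ∂ν := by
  have hk := hg.iterate k
  rw [← integral_map hk.measurable.aemeasurable (hk.map_eq.symm ▸ hF), hk.map_eq]

theorem integral_iterate_mul_iterate_of_le (hg : MeasurePreserving g ν ν)
    (hu : AEStronglyMeasurable u ν) (hv : AEStronglyMeasurable v ν) {j l : ℕ} (hjl : j ≤ l) :
    ∫ x, u (g^[j] x) * v (g^[l] x) ∂ν = lagCorr ν g u v (l - j) := by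
  have hprod : AEStronglyMeasurable (fun x => u x * v (g^[l - j] x)) ν :=
    hu.mul (hv.comp_measurePreserving (hg.iterate _))
  rw [lagCorr, ← hg.integral_comp_iterate hprod j]
  simp_rw [← Function.iterate_add_apply, Nat.sub_add_cancel hjl]

theorem integrable_iterate_mul_iterate (hg : MeasurePreserving g ν ν) (hu : MemLp u 2 ν)
    (hv : MemLp v 2 ν) (j l : ℕ) : Integrable (fun x => u (g^[j] x) * v (g^[l] x)) ν :=
  (hu.comp_measurePreserving (hg.iterate j)).integrable_mul
    (hv.comp_measurePreserving (hg.iterate l))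

theorem integral_birkhoff_mul_eq (hg : MeasurePreserving g ν ν) (hu : MemLp u 2 ν)
    (hv : MemLp v 2 ν) (m : ℕ) :
    ∫ x, ((√m)⁻¹ * ∑ k ∈ Finset.range m, u (g^[k] x)) *
        ((√m)⁻¹ * ∑ k ∈ Finset.range m, v (g^[k] x)) ∂ν =
      (m : ℝ)⁻¹ * ∑ i ∈ Finset.range m, (lagCorr ν g u v 0 +
        ∑ k ∈ Finset.range i, (lagCorr ν g u v (k + 1) + lagCorr ν g v u (k + 1))) := by
  have hsqrt : (√m)⁻¹ * (√m)⁻¹ = (m : ℝ)⁻¹ := by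
    rw [← mul_inv, Real.mul_self_sqrt m.cast_nonneg]
  have hint := integrable_iterate_mul_iterate hg hu hv
  simp_rw [mul_mul_mul_comm _ (∑ k ∈ Finset.range m, u (g^[k] _)), hsqrt, Finset.sum_mul_sum]
  rw [integral_const_mul,
    integral_finsetSum _ fun j _ => integrable_finsetSum _ fun l _ => hint j l]
  simp_rw [integral_finsetSum _ fun l _ => hint _ l]
  rw [sum_range_sum_range_eq_of_lag
    (fun j l hjl => integral_iterate_mul_iterate_of_le hg hu.1 hv.1 hjl)
    (fun j l hlj => ?_)]
  simp_rw [mul_comm (u _)]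
  exact integral_iterate_mul_iterate_of_le hg hv.1 hu.1 hlj

theorem tendsto_integral_birkhoff_mul (hg : MeasurePreserving g ν ν) (hu : MemLp u 2 ν)
    (hv : MemLp v 2 ν) (huv : Summable fun k => lagCorr ν g u v (k + 1))
    (hvu : Summable fun k => lagCorr ν g v u (k + 1)) :
    Tendsto (fun m : ℕ => ∫ x, ((√m)⁻¹ * ∑ k ∈ Finset.range m, u (g^[k] x)) *
        ((√m)⁻¹ * ∑ k ∈ Finset.range m, v (g^[k] x)) ∂ν) atTop
      (nhds (lagCorr ν g u v 0 + ∑' k, (lagCorr ν g u v (k + 1) + lagCorr ν g v u (k + 1)))) := by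
  simp_rw [integral_birkhoff_mul_eq hg hu hv]
  exact ((huv.add hvu).hasSum.tendsto_sum_nat.const_add _).cesaro

theorem lagCorr_sub_integral [IsProbabilityMeasure ν] (hg : MeasurePreserving g ν ν)
    (hu : MemLp u 2 ν) (hv : MemLp v 2 ν) (k : ℕ) :
    lagCorr ν g (fun x => u x - ∫ y, u y ∂ν) (fun x => v x - ∫ y, v y ∂ν) k =
      lagCorr ν g u v k - (∫ x, u x ∂ν) * ∫ x, v x ∂ν := by
  set cu := ∫ y, u y ∂ν
  set cv := ∫ y, v y ∂ν
  have hu1 : Integrable u ν := hu.integrable one_le_two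
  have hvk : Integrable (fun x => v (g^[k] x)) ν :=
    (hv.comp_measurePreserving (hg.iterate k)).integrable one_le_two
  have huv : Integrable (fun x => u x * v (g^[k] x)) ν := by
    simpa using integrable_iterate_mul_iterate hg hu hv 0 k
  have hexpand : (fun x => (u x - cu) * (v (g^[k] x) - cv)) =
      fun x => (u x * v (g^[k] x) - cu * v (g^[k] x)) - (cv * u x - cu * cv) := by
    ext x; ring
  have hleft : Integrable (fun x => u x * v (g^[k] x) - cu * v (g^[k] x)) ν :=
    huv.sub (hvk.const_mul _)
  have hright : Integrable (fun x => cv * u x - cu * cv) ν :=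
    (hu1.const_mul _).sub (integrable_const _)
  rw [lagCorr, lagCorr, hexpand, integral_sub hleft hright, integral_sub huv (hvk.const_mul _),
    integral_sub (hu1.const_mul _) (integrable_const _), integral_const_mul, integral_const_mul,
    hg.integral_comp_iterate hv.1, integral_const, probReal_univ, one_smul]
  ring

end LagCovariance

section Compositions

variable {X : Type*} {d : ℕ} {T : ℕ → ℕ → X → X} {γ : ℝ → X → X} {f : X → Fin d → ℝ}

theorem compSeq_const (g : X → X) (k : ℕ) : compSeq (fun _ => g) k = g^[k] := by
  induction k with
  | zero => rfl
  | succ k ih => rw [Function.iterate_succ', compSeq, ih]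

theorem gammaSeq_const (t : ℝ) (k : ℕ) : gammaSeq γ (fun _ => t) k = (γ t)^[k] := by
  induction k with
  | zero => rfl
  | succ k ih => rw [Function.iterate_succ', gammaSeq, ih]

theorem isFform_apply (T' : Set (X → X)) (a : Fin d) : IsFform f T' fun x => f x a :=
  ⟨a, a, 0, 0, fun _ => id, zero_le_one, fun _ h₁ h₂ => absurd (h₁.trans h₂) (by norm_num), by simp⟩

theorem isFform_mul_apply_iterate {t : ℝ} (ht : t ∈ Set.Icc (0 : ℝ) 1) (a b : Fin d) (k : ℕ) :
    IsFform f (Tprime T γ) fun x => f x a * f ((γ t)^[k] x) b :=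
  ⟨a, b, 1, k, fun _ => γ t, le_rfl, fun _ _ _ => Or.inr ⟨t, ht, rfl⟩, by simp [compSeq_const]⟩

end Compositions

section QuasistaticCovariance

variable {X : Type*} [MeasurableSpace X] {d : ℕ} {T : ℕ → ℕ → X → X} {γ : ℝ → X → X}
  {μ : Measure X} {μhat : ℝ → Measure X} {f : X → Fin d → ℝ} {C₀ φ ψ B : ℝ} {n₁ : ℕ}

theorem CondI.abs_integral_iterate_sub_le (hI : CondI T γ μ μhat f C₀ φ n₁) {F : X → ℝ}
    (hF : IsFform f (Tprime T γ) F) {ν₁ ν₂ : Measure X} (hν₁ : MemC μ μhat (Tprime T γ) ν₁)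
    (hν₂ : MemC μ μhat (Tprime T γ) ν₂) {t : ℝ} (ht : t ∈ Set.Icc (0 : ℝ) 1) {m : ℕ}
    (hm : n₁ ≤ m) (a : Fin d) {p : ℕ} (hp : p ≤ 1) :
    |∫ x, f x a ^ p * F ((γ t)^[m] x) ∂ν₁ - (∫ x, f x a ^ p ∂ν₁) * ∫ x, F ((γ t)^[m] x) ∂ν₂| ≤
      C₀ * (m : ℝ) ^ (-φ) := by
  simpa [compSeq_const] using hI F hF ν₁ ν₂ hν₁ hν₂ (fun _ => γ t)
    (fun _ _ => Or.inr ⟨t, ht, rfl⟩) 0 m (by omega) a p hp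

theorem CondII.abs_integral_iterate_sub_le (hII : CondII T γ μ μhat f C₀ ψ) {F : X → ℝ}
    (hF : IsFform f (Tprime T γ) F) {s t : ℝ} (hs : s ∈ Set.Icc (0 : ℝ) 1)
    (ht : t ∈ Set.Icc (0 : ℝ) 1) (a : Fin d) {p : ℕ} (hp : p ≤ 1) (k : ℕ) :
    |∫ x, f x a ^ p * (F ((γ s)^[k] x) - F ((γ t)^[k] x)) ∂μhat s| ≤ C₀ * k * |t - s| ^ ψ := by
  simpa [gammaSeq_const, abs_sub_comm] using hII.2 F hF s hs k (fun _ => t) (fun _ _ _ => ht)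
    a p hp |t - s| (abs_nonneg _) fun _ _ _ => (abs_sub_comm _ _).le

variable [∀ t, IsProbabilityMeasure (μhat t)]

theorem abs_integral_sub_integral_le_of_isFform (hI : CondI T γ μ μhat f C₀ φ n₁)
    (hII : CondII T γ μ μhat f C₀ ψ)
    (hmp : ∀ t ∈ Set.Icc (0 : ℝ) 1, MeasurePreserving (γ t) (μhat t) (μhat t)) {F : X → ℝ}
    (hF : IsFform f (Tprime T γ) F) (hFm : Measurable F) {K : ℝ} (hFK : ∀ x, |F x| ≤ K)
    {s t : ℝ} (hs : s ∈ Set.Icc (0 : ℝ) 1) (ht : t ∈ Set.Icc (0 : ℝ) 1) {m : ℕ} (hm : n₁ ≤ m) :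
    |∫ x, F x ∂μhat t - ∫ x, F x ∂μhat s| ≤ C₀ * (m : ℝ) ^ (-φ) + C₀ * m * |t - s| ^ ψ := by
  obtain ⟨a, -⟩ := id hF
  have hint : ∀ r ∈ Set.Icc (0 : ℝ) 1, Integrable (fun x => F ((γ r)^[m] x)) (μhat s) :=
    fun r hr => .of_bound (hFm.comp ((hmp r hr).measurable.iterate m)).aestronglyMeasurable K
      (ae_of_all _ fun x => hFK _)
  have hmeasure := hI.abs_integral_iterate_sub_le hF (.hat t ht) (.hat s hs) ht hm a zero_le_one
  have hdynamics := hII.abs_integral_iterate_sub_le hF hs ht a zero_le_one m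
  simp only [pow_zero, one_mul, integral_const, probReal_univ, smul_eq_mul, mul_one]
    at hmeasure hdynamics
  rw [integral_sub (hint s hs) (hint t ht), abs_sub_comm] at hdynamics
  rw [← (hmp t ht).integral_comp_iterate hFm.aestronglyMeasurable m,
    ← (hmp s hs).integral_comp_iterate hFm.aestronglyMeasurable m]
  exact (abs_sub_le _ (∫ x, F ((γ t)^[m] x) ∂μhat s) _).trans (add_le_add hmeasure hdynamics)

theorem abs_integral_apply_le (hfB : ∀ x a, |f x a| ≤ B) (ν : Measure X) [IsProbabilityMeasure ν]
    (a : Fin d) : |∫ x, f x a ∂ν| ≤ B := by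
  simpa using norm_integral_le_of_norm_le_const (μ := ν)
    (ae_of_all _ fun x => (Real.norm_eq_abs _).trans_le (hfB x a))

theorem memLp_apply (hf : Measurable f) (hfB : ∀ x a, |f x a| ≤ B) (ν : Measure X)
    [IsFiniteMeasure ν] (a : Fin d) (p : ENNReal) : MemLp (fun x => f x a) p ν :=
  MemLp.of_bound (measurable_pi_iff.mp hf a).aestronglyMeasurable B
    (ae_of_all _ fun x => (Real.norm_eq_abs _).trans_le (hfB x a))

theorem lagCorr_fhatQ {t : ℝ} (hmp : MeasurePreserving (γ t) (μhat t) (μhat t))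
    (hf : Measurable f) (hfB : ∀ x a, |f x a| ≤ B) (a b : Fin d) (k : ℕ) :
    lagCorr (μhat t) (γ t) (fhatQ μhat f a t) (fhatQ μhat f b t) k =
      ∫ x, f x a * f ((γ t)^[k] x) b ∂μhat t - (∫ x, f x a ∂μhat t) * ∫ x, f x b ∂μhat t :=
  lagCorr_sub_integral hmp (memLp_apply hf hfB _ a 2) (memLp_apply hf hfB _ b 2) k

theorem abs_lagCorr_fhatQ_le (hI : CondI T γ μ μhat f C₀ φ n₁)
    (hmp : ∀ t ∈ Set.Icc (0 : ℝ) 1, MeasurePreserving (γ t) (μhat t) (μhat t))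
    (hf : Measurable f) (hfB : ∀ x a, |f x a| ≤ B) {t : ℝ} (ht : t ∈ Set.Icc (0 : ℝ) 1)
    (a b : Fin d) {k : ℕ} (hk : n₁ ≤ k) :
    |lagCorr (μhat t) (γ t) (fhatQ μhat f a t) (fhatQ μhat f b t) k| ≤ C₀ * (k : ℝ) ^ (-φ) := by
  have hdecay := hI.abs_integral_iterate_sub_le (isFform_apply _ b) (.hat t ht) (.hat t ht) ht hk
    a le_rfl
  rw [(hmp t ht).integral_comp_iterate (memLp_apply hf hfB _ b 1).1] at hdecay
  simpa [lagCorr_fhatQ (hmp t ht) hf hfB] using hdecay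

theorem abs_lagCorr_fhatQ_sub_le (hI : CondI T γ μ μhat f C₀ φ n₁)
    (hII : CondII T γ μ μhat f C₀ ψ)
    (hmp : ∀ t ∈ Set.Icc (0 : ℝ) 1, MeasurePreserving (γ t) (μhat t) (μhat t))
    (hf : Measurable f) (hfB : ∀ x a, |f x a| ≤ B) (hC₀ : 0 ≤ C₀) {s t : ℝ}
    (hs : s ∈ Set.Icc (0 : ℝ) 1) (ht : t ∈ Set.Icc (0 : ℝ) 1) (a b : Fin d) {k m : ℕ}
    (hkm : k ≤ m) (hm : n₁ ≤ m) :
    |lagCorr (μhat t) (γ t) (fhatQ μhat f a t) (fhatQ μhat f b t) k -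
        lagCorr (μhat s) (γ s) (fhatQ μhat f a s) (fhatQ μhat f b s) k| ≤
      (2 + 2 * B) * C₀ * (m * |t - s| ^ ψ + (m : ℝ) ^ (-φ)) := by
  have hB : 0 ≤ B := (abs_nonneg _).trans (hfB (nonempty_of_isProbabilityMeasure (μhat s)).some a)
  set E := C₀ * (m : ℝ) ^ (-φ) + C₀ * m * |t - s| ^ ψ
  have hprod : ∀ r ∈ Set.Icc (0 : ℝ) 1, Measurable (fun x => f x a * f ((γ r)^[k] x) b) ∧
      ∀ x, |f x a * f ((γ r)^[k] x) b| ≤ B * B := fun r hr =>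
    ⟨(measurable_pi_iff.mp hf a).mul
      ((measurable_pi_iff.mp hf b).comp ((hmp r hr).measurable.iterate k)),
      fun x => by rw [abs_mul]; exact mul_le_mul (hfB x a) (hfB _ b) (abs_nonneg _) hB⟩
  have hint : ∀ r ∈ Set.Icc (0 : ℝ) 1,
      Integrable (fun x => f x a * f ((γ r)^[k] x) b) (μhat s) := fun r hr =>
    Integrable.of_bound (hprod r hr).1.aestronglyMeasurable (B * B) (ae_of_all _ fun x =>
      (Real.norm_eq_abs _).trans_le ((hprod r hr).2 x))
  have hmixed : |∫ x, f x a * f ((γ t)^[k] x) b ∂μhat t - ∫ x, f x a * f ((γ t)^[k] x) b ∂μhat s|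
      ≤ E := abs_integral_sub_integral_le_of_isFform hI hII hmp (isFform_mul_apply_iterate ht a b k)
        (hprod t ht).1 (hprod t ht).2 hs ht hm
  have hmoved : |∫ x, f x a * f ((γ t)^[k] x) b ∂μhat s - ∫ x, f x a * f ((γ s)^[k] x) b ∂μhat s|
      ≤ C₀ * m * |t - s| ^ ψ := by
    have h := hII.abs_integral_iterate_sub_le (isFform_apply _ b) hs ht a le_rfl k
    simp only [pow_one, mul_sub] at h
    rw [abs_sub_comm, ← integral_sub (hint s hs) (hint t ht)]
    exact h.trans (by gcongr)
  have hmean : ∀ c : Fin d, |∫ x, f x c ∂μhat t - ∫ x, f x c ∂μhat s| ≤ E := fun c =>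
    abs_integral_sub_integral_le_of_isFform hI hII hmp (isFform_apply _ c)
      (measurable_pi_iff.mp hf c) (hfB · c) hs ht hm
  have hmeans : |(∫ x, f x a ∂μhat t) * (∫ x, f x b ∂μhat t) -
      (∫ x, f x a ∂μhat s) * (∫ x, f x b ∂μhat s)| ≤ B * E + B * E := by
    rw [show ∀ p q p' q' : ℝ, p * q - p' * q' = p * (q - q') + q' * (p - p') by intros; ring]
    refine (abs_add_le _ _).trans (add_le_add ?_ ?_) <;> rw [abs_mul] <;>
      exact mul_le_mul (abs_integral_apply_le hfB _ _) (hmean _) (abs_nonneg _) hB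
  have hE : (2 + 2 * B) * C₀ * (m * |t - s| ^ ψ + (m : ℝ) ^ (-φ)) = 2 * E + 2 * B * E := by ring
  have hm0 : 0 ≤ C₀ * (m : ℝ) ^ (-φ) := by positivity
  rw [lagCorr_fhatQ (hmp t ht) hf hfB, lagCorr_fhatQ (hmp s hs) hf hfB, hE]
  rw [abs_le] at hmixed hmoved hmeans ⊢
  constructor <;> linarith [hmixed.1, hmixed.2, hmoved.1, hmoved.2, hmeans.1, hmeans.2]

theorem summable_lagCorr_fhatQ (hI : CondI T γ μ μhat f C₀ φ n₁)
    (hmp : ∀ t ∈ Set.Icc (0 : ℝ) 1, MeasurePreserving (γ t) (μhat t) (μhat t))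
    (hf : Measurable f) (hfB : ∀ x a, |f x a| ≤ B) (hφ : 1 < φ) {t : ℝ}
    (ht : t ∈ Set.Icc (0 : ℝ) 1) (a b : Fin d) :
    Summable fun k => lagCorr (μhat t) (γ t) (fhatQ μhat f a t) (fhatQ μhat f b t) (k + 1) :=
  .of_norm_bounded_eventually_nat
    (((summable_nat_add_iff 1).mpr (Real.summable_nat_rpow.mpr (neg_lt_neg hφ))).mul_left C₀)
    (eventually_atTop.mpr ⟨n₁, fun k hk => (Real.norm_eq_abs _).trans_le
      (abs_lagCorr_fhatQ_le hI hmp hf hfB ht a b (by omega))⟩)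

theorem sigHat_apply_eq_tsum (hI : CondI T γ μ μhat f C₀ φ n₁)
    (hmp : ∀ t ∈ Set.Icc (0 : ℝ) 1, MeasurePreserving (γ t) (μhat t) (μhat t))
    (hf : Measurable f) (hfB : ∀ x a, |f x a| ≤ B) (hφ : 1 < φ) {t : ℝ}
    (ht : t ∈ Set.Icc (0 : ℝ) 1) (α β : Fin d) :
    SigHat γ μhat f t α β =
      lagCorr (μhat t) (γ t) (fhatQ μhat f α t) (fhatQ μhat f β t) 0 +
        ∑' k, (lagCorr (μhat t) (γ t) (fhatQ μhat f α t) (fhatQ μhat f β t) (k + 1) +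
          lagCorr (μhat t) (γ t) (fhatQ μhat f β t) (fhatQ μhat f α t) (k + 1)) :=
  (tendsto_integral_birkhoff_mul (hmp t ht)
    ((memLp_apply hf hfB _ α 2).sub (memLp_const _))
    ((memLp_apply hf hfB _ β 2).sub (memLp_const _))
    (summable_lagCorr_fhatQ hI hmp hf hfB hφ ht α β)
    (summable_lagCorr_fhatQ hI hmp hf hfB hφ ht β α)).limUnder_eq

theorem abs_sigHat_sub_le (hI : CondI T γ μ μhat f C₀ φ n₁) (hII : CondII T γ μ μhat f C₀ ψ)
    (hmp : ∀ t ∈ Set.Icc (0 : ℝ) 1, MeasurePreserving (γ t) (μhat t) (μhat t))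
    (hf : Measurable f) (hfB : ∀ x a, |f x a| ≤ B) (hC₀ : 0 ≤ C₀) (hφ : 1 < φ) {s t : ℝ}
    (hs : s ∈ Set.Icc (0 : ℝ) 1) (ht : t ∈ Set.Icc (0 : ℝ) 1) (α β : Fin d) {N : ℕ}
    (hN₁ : n₁ ≤ N) (hN : 0 < N) :
    |SigHat γ μhat f t α β - SigHat γ μhat f s α β| ≤
      (3 * ((2 + 2 * B) * C₀) + 4 * C₀ / (φ - 1)) *
        ((N : ℝ) ^ 2 * |t - s| ^ ψ + (N : ℝ) ^ (1 - φ)) := by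
  set c : ℝ → Fin d → Fin d → ℕ → ℝ := fun r a b k =>
    lagCorr (μhat r) (γ r) (fhatQ μhat f a r) (fhatQ μhat f b r) k
  set ε := (2 + 2 * B) * C₀ * (N * |t - s| ^ ψ + (N : ℝ) ^ (-φ))
  have hlag : ∀ a b k, k ≤ N → |c t a b k - c s a b k| ≤ ε := fun a b k hk =>
    abs_lagCorr_fhatQ_sub_le hI hII hmp hf hfB hC₀ hs ht a b hk hN₁
  have hdecay : ∀ r ∈ Set.Icc (0 : ℝ) 1, ∀ a b (k : ℕ), N ≤ k →
      |c r a b (k + 1)| ≤ C₀ * ((k : ℝ) + 1) ^ (-φ) := fun r hr a b k hk => by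
    have h := abs_lagCorr_fhatQ_le hI hmp hf hfB hr a b (k := k + 1) (by omega)
    push_cast at h
    exact h
  have hseries := abs_tsum_sub_tsum_le (ε := 2 * ε) (K := 4 * C₀) hφ hN
    (a := fun k => c t α β (k + 1) + c t β α (k + 1))
    (b := fun k => c s α β (k + 1) + c s β α (k + 1))
    (fun k hk => by
      rw [add_sub_add_comm, two_mul]
      exact (abs_add_le _ _).trans (add_le_add (hlag α β _ hk) (hlag β α _ hk)))
    (fun k hk => by
      linarith [abs_add_le (c t α β (k + 1)) (c t β α (k + 1)),
        abs_add_le (c s α β (k + 1)) (c s β α (k + 1)), hdecay t ht α β k hk,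
        hdecay t ht β α k hk, hdecay s hs α β k hk, hdecay s hs β α k hk])
  rw [sigHat_apply_eq_tsum hI hmp hf hfB hφ ht, sigHat_apply_eq_tsum hI hmp hf hfB hφ hs,
    add_sub_add_comm]
  refine (abs_add_le _ _).trans ((add_le_add (hlag α β 0 N.zero_le) hseries).trans ?_)
  have hB : 0 ≤ B := (abs_nonneg _).trans (hfB (nonempty_of_isProbabilityMeasure (μhat s)).some α)
  have hN1 : (1 : ℝ) ≤ N := Nat.one_le_cast.mpr hN
  have hε : 0 ≤ ε := by positivity
  have hpow : (N : ℝ) * (N : ℝ) ^ (-φ) = (N : ℝ) ^ (1 - φ) := by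
    rw [sub_eq_add_neg, Real.rpow_add (by positivity), Real.rpow_one]
  have htail : 0 ≤ 4 * C₀ / (φ - 1) := div_nonneg (by positivity) (by linarith)
  calc ε + (N * (2 * ε) + 4 * C₀ * (N : ℝ) ^ (1 - φ) / (φ - 1))
      ≤ 3 * (N * ε) + 4 * C₀ / (φ - 1) * (N : ℝ) ^ (1 - φ) := by
        rw [mul_div_right_comm]; nlinarith [le_mul_of_one_le_left hε hN1]
    _ = 3 * ((2 + 2 * B) * C₀) * ((N : ℝ) ^ 2 * |t - s| ^ ψ + (N : ℝ) ^ (1 - φ)) +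
          4 * C₀ / (φ - 1) * (N : ℝ) ^ (1 - φ) := by rw [← hpow]; ring
    _ ≤ _ := by
      have hhead : 0 ≤ (N : ℝ) ^ 2 * |t - s| ^ ψ := by positivity
      nlinarith [mul_nonneg htail hhead]

end QuasistaticCovariance

theorem qds_limit_covariance_holder_general
    {X : Type*} [MeasurableSpace X] {d : ℕ}
    (T : ℕ → ℕ → X → X) (γ : ℝ → X → X) (μ : Measure X) (μhat : ℝ → Measure X)
    (f : X → Fin d → ℝ)
    (hμhatP : ∀ t, IsProbabilityMeasure (μhat t))
    (hγ : ∀ t, Measurable (γ t))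
    (hinv : ∀ t ∈ Set.Icc (0:ℝ) 1, (μhat t).map (γ t) = μhat t)
    (hf : Measurable f) (B : ℝ) (hfB : ∀ x α, |f x α| ≤ B)
    (C₀ φ ψ : ℝ) (n₁ : ℕ) (hC₀ : 0 < C₀) (hφ : 1 < φ)
    (hψ : ψ ∈ Set.Ioc (0:ℝ) 1)
    (hI : CondI T γ μ μhat f C₀ φ n₁) (hII : CondII T γ μ μhat f C₀ ψ) :
    ∀ α β : Fin d, ∃ C : ℝ, 0 ≤ C ∧
      ∀ s ∈ Set.Icc (0:ℝ) 1, ∀ t ∈ Set.Icc (0:ℝ) 1,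
        |SigHat γ μhat f t α β - SigHat γ μhat f s α β| ≤
          C * |t - s| ^ (ψ * (φ - 1) / (φ + 1)) := by
  intro α β
  have hmp : ∀ t ∈ Set.Icc (0 : ℝ) 1, MeasurePreserving (γ t) (μhat t) (μhat t) :=
    fun t ht => ⟨hγ t, hinv t ht⟩
  have hB : 0 ≤ B := (abs_nonneg _).trans (hfB (nonempty_of_isProbabilityMeasure (μhat 0)).some α)
  set K := 3 * ((2 + 2 * B) * C₀) + 4 * C₀ / (φ - 1)
  have hK : 0 ≤ K := by have := sub_pos.mpr hφ; positivity
  refine ⟨(((n₁ : ℝ) + 2) ^ 2 + 1) * K, by positivity, fun s hs t ht => ?_⟩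
  rcases eq_or_ne t s with rfl | hts
  · rw [sub_self, abs_zero]
    exact mul_nonneg (by positivity) (Real.rpow_nonneg (abs_nonneg _) _)
  obtain ⟨N, hN₁, hN, hbalance⟩ := exists_nat_sq_mul_rpow_add_rpow_le
    (abs_pos.mpr (sub_ne_zero.mpr hts))
    (abs_sub_le_iff.mpr ⟨by linarith [ht.2, hs.1], by linarith [hs.2, ht.1]⟩) hψ.1 hφ n₁
  calc _ ≤ K * ((N : ℝ) ^ 2 * |t - s| ^ ψ + (N : ℝ) ^ (1 - φ)) :=
        abs_sigHat_sub_le hI hII hmp hf hfB hC₀.le hφ hs ht α β hN₁ hN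
    _ ≤ K * ((((n₁ : ℝ) + 2) ^ 2 + 1) * |t - s| ^ (ψ * (φ - 1) / (φ + 1))) :=
        mul_le_mul_of_nonneg_left hbalance hK
    _ = _ := by ring

/-- **Lemma 4.3, second part**: under conditions (I) and (II), each entry
`t ↦ (Σ̂_t)_{αβ}(f)` is Hölder continuous on `[0,1]` with exponent `ψ(φ−1)/(φ+1)`. -/
theorem qds_limit_covariance_holder
    {X : Type*} [MeasurableSpace X] [TopologicalSpace (X → X)] {d : ℕ}
    (T : ℕ → ℕ → X → X) (γ : ℝ → X → X) (μ : Measure X) (μhat : ℝ → Measure X)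
    (f : X → Fin d → ℝ)
    (hμP : IsProbabilityMeasure μ) (hμhatP : ∀ t, IsProbabilityMeasure (μhat t))
    (hT : ∀ n k, Measurable (T n k)) (hγ : ∀ t, Measurable (γ t))
    (hinv : ∀ t ∈ Set.Icc (0:ℝ) 1, (μhat t).map (γ t) = μhat t)
    (hf : Measurable f) (B : ℝ) (hfB : ∀ x α, |f x α| ≤ B)
    (hQDS : ∀ t ∈ Set.Icc (0:ℝ) 1,
      Tendsto (fun n : ℕ => T n ⌊(n:ℝ) * t⌋₊) atTop (nhds (γ t)))
    (C₀ φ ψ : ℝ) (n₁ : ℕ) (hC₀ : 0 < C₀) (hφ : 1 < φ) (hn₁ : 1 ≤ n₁)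
    (hψ : ψ ∈ Set.Ioc (0:ℝ) 1)
    (hI : CondI T γ μ μhat f C₀ φ n₁) (hII : CondII T γ μ μhat f C₀ ψ) :
    ∀ α β : Fin d, ∃ C : ℝ, 0 ≤ C ∧
      ∀ s ∈ Set.Icc (0:ℝ) 1, ∀ t ∈ Set.Icc (0:ℝ) 1,
        |SigHat γ μhat f t α β - SigHat γ μhat f s α β| ≤
          C * |t - s| ^ (ψ * (φ - 1) / (φ + 1)) :=
  qds_limit_covariance_holder_general T γ μ μhat f hμhatP hγ hinv hf B hfB C₀ φ ψ n₁ hC₀ hφ hψ hI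
    hII
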